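/- Let n ≥ 1, m > 0 and 0 < θ ≤ 1. Then there exist δ₀ ∈ (0, δ) and a constant C > 0 depending only on n, δ₀ and θ such that for all t ≥ 1 and all P₁ ∈ ℝ, ∫_{|ξ| ≤ δ₀} t² P₁² e^{-|ξ|² t} ( (√(|ξ|² + m² log(1+|ξ|^{2θ})) − b(ξ)) / b(ξ) )² dξ ≤ C m^{-2} P₁² t^{-(n+4−4θ)/2}. -/

import Mathlib

/-!
Write `L = log (1 + r^{2θ})`. Since `b² = (r² + m²L) - r⁴/4`, the numerator is a difference of
square roots of two numbers `r⁴/4` apart, so the ratio is at most `r⁴/(8b²)`; for `r ≤ 1` we have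
`b² ≥ m²L ≥ m²r^{2θ}/2`, so its square is at most `m⁻⁴(r²)^{4-2θ}/16`. On the unit ball the integrand
is then at most `m⁻⁴P₁²t^{2θ-2}(r²t)^{4-2θ}e^{-r²t}/16`; absorbing `(r²t)^{4-2θ}` into half of the
exponential leaves a Gaussian, whose integral over `ℝⁿ` is `(2π/t)^{n/2}`.
-/

open MeasureTheory Real

noncomputable section

/-- Euclidean space `ℝⁿ`. -/
abbrev E (n : ℕ) := EuclideanSpace ℝ (Fin n)

/-- The Fourier transform `û₁(ξ) = ∫ e^{-i x·ξ} u₁(x) dx`. -/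
def fourierT (n : ℕ) (u₁ : E n → ℝ) (ξ : E n) : ℂ :=
  ∫ x : E n, Complex.exp (-(Complex.I * ((inner ℝ x ξ : ℝ) : ℂ))) * (u₁ x : ℂ)

/-- `b(r) = (1/2)√(4r² + 4m² log(1+r^{2θ}) − r⁴)` (low frequencies). -/
def bF (m θ r : ℝ) : ℝ :=
  Real.sqrt (4 * r ^ 2 + 4 * m ^ 2 * Real.log (1 + r ^ (2 * θ)) - r ^ 4) / 2

/-- `d(r) = (1/2)√(r⁴ − 4r² − 4m² log(1+r^{2θ}))` (high frequencies). -/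
def dF (m θ r : ℝ) : ℝ :=
  Real.sqrt (r ^ 4 - 4 * r ^ 2 - 4 * m ^ 2 * Real.log (1 + r ^ (2 * θ))) / 2

namespace Real

lemma half_le_log_one_add {x : ℝ} (hx₀ : 0 ≤ x) (hx₁ : x ≤ 1) : x / 2 ≤ log (1 + x) := by
  have h := one_sub_inv_le_log_of_pos (show 0 < 1 + x by linarith)
  calc x / 2 ≤ x / (1 + x) := div_le_div_of_nonneg_left hx₀ (by linarith) (by linarith)
    _ = 1 - (1 + x)⁻¹ := by field_simp; ring
    _ ≤ log (1 + x) := h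

lemma sq_sqrt_sub_sqrt_div_sqrt_le {a b : ℝ} (hb : 0 < b) (hba : b ≤ a) :
    ((√a - √b) / √b) ^ 2 ≤ ((a - b) / (2 * b)) ^ 2 := by
  have hy : 0 < √b := sqrt_pos.mpr hb
  have hyx : √b ≤ √a := sqrt_le_sqrt hba
  refine pow_le_pow_left₀ (div_nonneg (by linarith) hy.le) ?_ 2
  rw [div_le_div_iff₀ hy (by positivity)]
  have hsq : (a - b) * √b - (√a - √b) * (2 * b) = √b * (√a - √b) ^ 2 := by
    linear_combination (-√b) * sq_sqrt (hb.le.trans hba) + (2 * √a - √b) * sq_sqrt hb.le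
  linarith [mul_nonneg hy.le (sq_nonneg (√a - √b))]

lemma rpow_le_mul_exp_half {x p : ℝ} (hx : 0 ≤ x) (hp₀ : 0 ≤ p) (hp₄ : p ≤ 4) :
    x ^ p ≤ 8 ^ 4 * exp (x / 2) := by
  have h₁ : 1 + x ≤ 8 * exp (x / 8) := by linarith [add_one_le_exp (x / 8)]
  calc x ^ p ≤ (1 + x) ^ p := rpow_le_rpow hx (by linarith) hp₀
    _ ≤ (1 + x) ^ (4 : ℝ) := rpow_le_rpow_of_exponent_le (by linarith) hp₄
    _ = (1 + x) ^ 4 := by norm_cast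
    _ ≤ (8 * exp (x / 8)) ^ 4 := pow_le_pow_left₀ (by linarith) h₁ 4
    _ = 8 ^ 4 * exp (x / 2) := by rw [mul_pow, ← exp_nat_mul]; ring_nf

end Real

lemma bF_eq_sqrt (m θ r : ℝ) :
    bF m θ r = √(r ^ 2 + m ^ 2 * log (1 + r ^ (2 * θ)) - r ^ 4 / 4) := by
  rw [bF, show r ^ 2 + m ^ 2 * log (1 + r ^ (2 * θ)) - r ^ 4 / 4
      = (4 * r ^ 2 + 4 * m ^ 2 * log (1 + r ^ (2 * θ)) - r ^ 4) / 2 ^ 2 by ring,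
    sqrt_div' _ (by norm_num : (0 : ℝ) ≤ 2 ^ 2), sqrt_sq (by norm_num)]

lemma sq_sqrt_sub_bF_div_bF_le {m θ r : ℝ} (hm : 0 < m) (hθ : 0 < θ) (hr₀ : 0 ≤ r)
    (hr₁ : r ≤ 1) :
    ((√(r ^ 2 + m ^ 2 * log (1 + r ^ (2 * θ))) - bF m θ r) / bF m θ r) ^ 2
      ≤ (r ^ 2) ^ (4 - 2 * θ) / (16 * m ^ 4) := by
  rcases hr₀.eq_or_lt with rfl | hr
  · -- `b(0) = 0`, so the ratio is `0` by the convention `x / 0 = 0`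
    simp [bF, zero_rpow (show 2 * θ ≠ 0 by positivity)]
    positivity
  rw [bF_eq_sqrt]
  set u := r ^ (2 * θ)
  have hu : 0 < u := rpow_pos_of_pos hr _
  have hL : u / 2 ≤ log (1 + u) := half_le_log_one_add hu.le (rpow_le_one hr.le hr₁ (by positivity))
  have hgap : m ^ 2 * u / 2 ≤ r ^ 2 + m ^ 2 * log (1 + u) - r ^ 4 / 4 := by
    nlinarith [mul_le_mul_of_nonneg_left hL (sq_nonneg m), pow_le_one₀ hr₀ hr₁ (n := 2)]
  have hpow : (r ^ 2) ^ (4 - 2 * θ) = r ^ 8 / u ^ 2 := by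
    rw [← rpow_natCast r 2, ← rpow_mul hr₀, mul_sub, rpow_sub hr, ← rpow_natCast u 2,
      ← rpow_mul hr₀]
    norm_num
    ring_nf
  have hβ : 0 < r ^ 2 + m ^ 2 * log (1 + u) - r ^ 4 / 4 := hgap.trans_lt' (by positivity)
  have hroot := sq_sqrt_sub_sqrt_div_sqrt_le hβ (sub_le_self _ (by positivity))
  rw [sub_sub_cancel] at hroot
  calc _ ≤ _ := hroot
    _ ≤ ((r ^ 4 / 4) / (m ^ 2 * u)) ^ 2 := by
        gcongr ?_ ^ 2
        exact div_le_div_of_nonneg_left (by positivity) (by positivity) (by linarith)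
    _ = (r ^ 2) ^ (4 - 2 * θ) / (16 * m ^ 4) := by rw [hpow]; field_simp; ring

lemma integrand_le_gaussian {m θ t r : ℝ} (P₁ : ℝ) (hm : 0 < m) (hθ₀ : 0 < θ) (hθ₁ : θ ≤ 1)
    (ht : 0 < t) (hr₀ : 0 ≤ r) (hr₁ : r ≤ 1) :
    t ^ 2 * P₁ ^ 2 * exp (-(r ^ 2) * t) *
        ((√(r ^ 2 + m ^ 2 * log (1 + r ^ (2 * θ))) - bF m θ r) / bF m θ r) ^ 2
      ≤ 256 * (m ^ 4)⁻¹ * P₁ ^ 2 * t ^ (2 * θ - 2) * exp (-(t / 2) * r ^ 2) := by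
  have hscale : t ^ 2 * (r ^ 2) ^ (4 - 2 * θ) = t ^ (2 * θ - 2) * (r ^ 2 * t) ^ (4 - 2 * θ) := by
    rw [mul_rpow (by positivity) ht.le, mul_left_comm, ← rpow_add ht,
      show 2 * θ - 2 + (4 - 2 * θ) = (2 : ℝ) by ring, rpow_two, mul_comm]
  have hexp : exp (-(r ^ 2) * t) * exp (r ^ 2 * t / 2) = exp (-(t / 2) * r ^ 2) := by
    rw [← exp_add]; ring_nf
  calc _ ≤ t ^ 2 * P₁ ^ 2 * exp (-(r ^ 2) * t) * ((r ^ 2) ^ (4 - 2 * θ) / (16 * m ^ 4)) := by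
        gcongr
        exact sq_sqrt_sub_bF_div_bF_le hm hθ₀ hr₀ hr₁
    _ = P₁ ^ 2 / (16 * m ^ 4) * t ^ (2 * θ - 2) * (r ^ 2 * t) ^ (4 - 2 * θ) *
          exp (-(r ^ 2) * t) := by
        linear_combination (P₁ ^ 2 * exp (-(r ^ 2) * t) / (16 * m ^ 4)) * hscale
    _ ≤ P₁ ^ 2 / (16 * m ^ 4) * t ^ (2 * θ - 2) * (8 ^ 4 * exp (r ^ 2 * t / 2)) *
          exp (-(r ^ 2) * t) := by
        gcongr
        exact rpow_le_mul_exp_half (by positivity) (by linarith) (by linarith)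
    _ = _ := by rw [← hexp]; field_simp; ring

lemma setIntegral_le_mul_gaussian {V : Type*} [NormedAddCommGroup V] [InnerProductSpace ℝ V]
    [FiniteDimensional ℝ V] [MeasurableSpace V] [BorelSpace V] {f : V → ℝ} {s : Set V}
    {b c : ℝ} (hb : 0 < b) (hc : 0 ≤ c) (hs : MeasurableSet s) (hf₀ : ∀ x ∈ s, 0 ≤ f x)
    (hf : ∀ x ∈ s, f x ≤ c * exp (-b * ‖x‖ ^ 2)) :
    ∫ x in s, f x ≤ c * (π / b) ^ (Module.finrank ℝ V / 2 : ℝ) := by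
  have hG : Integrable fun x : V ↦ c * exp (-b * ‖x‖ ^ 2) :=
    (Integrable.of_integral_ne_zero
      (by rw [GaussianFourier.integral_rexp_neg_mul_sq_norm hb]; positivity)).const_mul c
  calc ∫ x in s, f x ≤ ∫ x in s, c * exp (-b * ‖x‖ ^ 2) :=
        integral_mono_of_nonneg (ae_restrict_of_forall_mem hs hf₀) hG.integrableOn
          (ae_restrict_of_forall_mem hs hf)
    _ ≤ ∫ x, c * exp (-b * ‖x‖ ^ 2) :=
        setIntegral_le_integral hG (Filter.Eventually.of_forall fun _ ↦ by positivity)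
    _ = c * (π / b) ^ (Module.finrank ℝ V / 2 : ℝ) := by
        rw [integral_const_mul, GaussianFourier.integral_rexp_neg_mul_sq_norm hb]

theorem stmt8_general (n : ℕ) (m θ : ℝ) (hm : 0 < m) (hθ1 : 0 < θ) (hθ2 : θ ≤ 1)
    (δ : ℝ) (hδ2 : 2 < δ) :
    ∃ δ₀ : ℝ, 0 < δ₀ ∧ δ₀ < δ ∧ ∃ C : ℝ, 0 < C ∧
      ∀ t : ℝ, 1 ≤ t → ∀ P₁ : ℝ,
        (∫ ξ in {ξ : E n | ‖ξ‖ ≤ δ₀},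
            t ^ 2 * P₁ ^ 2 * Real.exp (-(‖ξ‖ ^ 2) * t) *
              ((Real.sqrt (‖ξ‖ ^ 2 + m ^ 2 * Real.log (1 + ‖ξ‖ ^ (2 * θ))) - bF m θ ‖ξ‖) /
                bF m θ ‖ξ‖) ^ 2) ≤
          C * m⁻¹ ^ 2 * P₁ ^ 2 * t ^ (-((n : ℝ) + 4 - 4 * θ) / 2) := by
  refine ⟨1, one_pos, by linarith, 256 * (2 * π) ^ ((n : ℝ) / 2) * m⁻¹ ^ 2, by positivity, ?_⟩
  intro t ht P₁
  have ht₀ : 0 < t := one_pos.trans_le ht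
  calc _ ≤ 256 * (m ^ 4)⁻¹ * P₁ ^ 2 * t ^ (2 * θ - 2) * (π / (t / 2)) ^ ((n : ℝ) / 2) := by
        simpa [finrank_euclideanSpace_fin] using
          setIntegral_le_mul_gaussian (s := {ξ : E n | ‖ξ‖ ≤ 1}) (half_pos ht₀) (by positivity)
            (isClosed_le continuous_norm continuous_const).measurableSet
            (fun ξ _ ↦ by positivity)
            (fun ξ hξ ↦ integrand_le_gaussian P₁ hm hθ1 hθ2 ht₀ (norm_nonneg ξ) hξ)
    _ = _ := by
        rw [show π / (t / 2) = 2 * π / t by field_simp, div_rpow (by positivity) ht₀.le,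
          show -((n : ℝ) + 4 - 4 * θ) / 2 = 2 * θ - 2 - n / 2 by ring, rpow_sub ht₀ (2 * θ - 2)]
        ring

/-- the `F₂`-estimate on the low frequency zone. -/
theorem stmt8 (n : ℕ) (hn : 1 ≤ n) (m θ : ℝ) (hm : 0 < m) (hθ1 : 0 < θ) (hθ2 : θ ≤ 1)
    (δ : ℝ) (hδ2 : 2 < δ)
    (hδneg : ∀ r : ℝ, 0 < r → r < δ →
      r ^ 4 - 4 * r ^ 2 - 4 * m ^ 2 * Real.log (1 + r ^ (2 * θ)) < 0)
    (hδpos : ∀ r : ℝ, δ ≤ r →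
      0 ≤ r ^ 4 - 4 * r ^ 2 - 4 * m ^ 2 * Real.log (1 + r ^ (2 * θ))) :
    ∃ δ₀ : ℝ, 0 < δ₀ ∧ δ₀ < δ ∧ ∃ C : ℝ, 0 < C ∧
      ∀ t : ℝ, 1 ≤ t → ∀ P₁ : ℝ,
        (∫ ξ in {ξ : E n | ‖ξ‖ ≤ δ₀},
            t ^ 2 * P₁ ^ 2 * Real.exp (-(‖ξ‖ ^ 2) * t) *
              ((Real.sqrt (‖ξ‖ ^ 2 + m ^ 2 * Real.log (1 + ‖ξ‖ ^ (2 * θ))) - bF m θ ‖ξ‖) /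
                bF m θ ‖ξ‖) ^ 2) ≤
          C * m⁻¹ ^ 2 * P₁ ^ 2 * t ^ (-((n : ℝ) + 4 - 4 * θ) / 2) :=
  stmt8_general n m θ hm hθ1 hθ2 δ hδ2

end
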